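/- arXiv:1702.04300 — 2 statements merged into one kernel-verified Lean document; each statement's English description precedes it below -/
import Mathlib

section
/- Let x ∈ ℝⁿ with x > 0 componentwise and d ∈ ℝⁿ with ‖X⁻¹d‖ ≤ β < 1 where X = diag(x). Then -∑ᵢ ln(xᵢ + dᵢ) + ∑ᵢ ln(xᵢ) ≤ -eᵀX⁻¹d + β²/(2(1-β)), where e is the vector of ones. -/
/-!
Writing `tᵢ = dᵢ / xᵢ`, the left-hand side is `∑ᵢ -log (1 + tᵢ)`, and each `|tᵢ| ≤ ‖X⁻¹d‖ ≤ β`.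
For `|t| ≤ β` the function `g t = log (1 + t) - t + t² / (2 (1 - β))` vanishes at `0` and has
derivative `t (t + β) / ((1 - β) (1 + t))`, which has the sign of `t`; so `g ≥ 0`, i.e.
`-log (1 + t) ≤ -t + t² / (2 (1 - β))`. Summing, and using `∑ tᵢ² ≤ β²`, gives the claim.
-/

open Finset Real

theorem le_of_hasDerivAt_of_sub_mul_nonneg {f f' : ℝ → ℝ} {a t : ℝ}
    (hf : ∀ y ∈ Set.uIcc a t, HasDerivAt f (f' y) y)
    (hsign : ∀ y ∈ Set.uIcc a t, 0 ≤ (y - a) * f' y) : f a ≤ f t := by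
  rcases le_total a t with hat | hta
  · rw [Set.uIcc_of_le hat] at hf hsign
    refine monotoneOn_of_hasDerivWithinAt_nonneg (convex_Icc a t)
      (fun y hy ↦ (hf y hy).continuousAt.continuousWithinAt)
      (fun y hy ↦ (hf y (interior_subset hy)).hasDerivWithinAt) (fun y hy ↦ ?_)
      (Set.left_mem_Icc.2 hat) (Set.right_mem_Icc.2 hat) hat
    rw [interior_Icc] at hy
    exact nonneg_of_mul_nonneg_right (hsign y (Set.Ioo_subset_Icc_self hy)) (sub_pos.2 hy.1)
  · rw [Set.uIcc_of_ge hta] at hf hsign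
    refine antitoneOn_of_hasDerivWithinAt_nonpos (convex_Icc t a)
      (fun y hy ↦ (hf y hy).continuousAt.continuousWithinAt)
      (fun y hy ↦ (hf y (interior_subset hy)).hasDerivWithinAt) (fun y hy ↦ ?_)
      (Set.left_mem_Icc.2 hta) (Set.right_mem_Icc.2 hta) hta
    rw [interior_Icc] at hy
    exact nonpos_of_mul_nonneg_right (hsign y (Set.Ioo_subset_Icc_self hy)) (sub_neg.2 hy.2)

theorem neg_log_one_add_le {β t : ℝ} (hβ : β < 1) (ht : |t| ≤ β) :
    -log (1 + t) ≤ -t + t ^ 2 / (2 * (1 - β)) := by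
  have h1β : 0 < 1 - β := by linarith
  have hrange : Set.uIcc 0 t ⊆ Set.Icc (-β) β :=
    Set.uIcc_subset_Icc ⟨by linarith [abs_nonneg t], by linarith [abs_nonneg t]⟩ (abs_le.1 ht)
  have hderiv : ∀ y ∈ Set.uIcc 0 t,
      HasDerivAt (fun s ↦ log (1 + s) - s + s ^ 2 / (2 * (1 - β)))
        (y * (y + β) / ((1 - β) * (1 + y))) y := by
    intro y hy
    have h1y : 1 + y ≠ 0 := by linarith [(hrange hy).1]
    refine ((((hasDerivAt_id y).const_add 1).log h1y).sub (hasDerivAt_id y)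
      |>.add ((hasDerivAt_pow 2 y).div_const _)).congr_deriv ?_
    simp only [id]
    field_simp
    ring
  have hg := le_of_hasDerivAt_of_sub_mul_nonneg hderiv fun y hy ↦ by
    have h1y : 0 < 1 + y := by linarith [(hrange hy).1]
    have hyβ : 0 ≤ y + β := by linarith [(hrange hy).1]
    rw [sub_zero, ← mul_div_assoc, ← mul_assoc]
    exact div_nonneg (mul_nonneg (mul_self_nonneg y) hyβ) (mul_pos h1β h1y).le
  norm_num at hg
  linarith

theorem abs_le_sqrt_sum_sq {ι : Type*} [Fintype ι] (f : ι → ℝ) (i : ι) :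
    |f i| ≤ √(∑ j, f j ^ 2) := by
  rw [← sqrt_sq_eq_abs]
  exact sqrt_le_sqrt (single_le_sum (fun j _ ↦ sq_nonneg (f j)) (mem_univ i))

theorem log_add_eq_log_add_log_one_add_div {x d : ℝ} (hx : 0 < x) (hdx : 0 < 1 + d / x) :
    log (x + d) = log x + log (1 + d / x) := by
  rw [← log_mul hx.ne' hdx.ne', mul_one_add, mul_div_cancel₀ _ hx.ne']

theorem stmt_0 {n : ℕ} (x d : Fin n → ℝ) (β : ℝ) (hx : ∀ i, 0 < x i)
    (hβ : β < 1) (hd : Real.sqrt (∑ i, (d i / x i) ^ 2) ≤ β) :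
    -∑ i, Real.log (x i + d i) + ∑ i, Real.log (x i) ≤
      -(∑ i, d i / x i) + β ^ 2 / (2 * (1 - β)) := by
  have hβ0 : 0 ≤ β := (sqrt_nonneg _).trans hd
  have habs (i : Fin n) : |d i / x i| ≤ β := (abs_le_sqrt_sum_sq (fun j ↦ d j / x j) i).trans hd
  have hlog (i : Fin n) : log (x i + d i) = log (x i) + log (1 + d i / x i) :=
    log_add_eq_log_add_log_one_add_div (hx i) (by linarith [(abs_le.1 (habs i)).1])
  calc -∑ i, log (x i + d i) + ∑ i, log (x i) = ∑ i, -log (1 + d i / x i) := by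
        simp only [hlog, sum_add_distrib, sum_neg_distrib]
        ring
    _ ≤ ∑ i, (-(d i / x i) + (d i / x i) ^ 2 / (2 * (1 - β))) :=
        sum_le_sum fun i _ ↦ neg_log_one_add_le hβ (habs i)
    _ = -(∑ i, d i / x i) + (∑ i, (d i / x i) ^ 2) / (2 * (1 - β)) := by
        rw [sum_add_distrib, sum_neg_distrib, sum_div]
    _ ≤ -(∑ i, d i / x i) + β ^ 2 / (2 * (1 - β)) := by
        have h1β : 0 < 1 - β := by linarith
        gcongr
        exact (sqrt_le_left hβ0).1 hd
end

section
/- Let H be a symmetric n×n matrix, B ∈ ℝ^{m×n}, β > 0, and consider the trust-region problem: minimize gᵀd + ½dᵀHd subject to Bd = 0, ‖d‖ ≤ β. Suppose d* is feasible and there exist y ∈ ℝᵐ and λ ≥ 0 with (H + λI)d* - Bᵀy = -g, λ(β - ‖d*‖) = 0, and dᵀ(H + λI)d ≥ 0 for all d with Bd = 0. Then gᵀd* + ½(d*)ᵀHd* ≤ -½λ‖d*‖² and d* is a global minimizer of the trust-region problem. -/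
/-!
Write `q(d) = gᵀd + ½ dᵀHd`. Expanding `q` about `d*`, the KKT relation
`g + Hd* = Bᵀy - λd*` and the second-order condition on `ker B` show that `d*` minimizes
`q(d) + (λ/2)‖d‖²` over `Bd = 0`. Taking `d = 0` gives the bound; for a feasible `d`,
complementarity gives `λ‖d*‖² = λβ² ≥ λ‖d‖²`, whence `q(d*) ≤ q(d)`.
-/
open scoped Matrix

namespace Matrix

variable {ι κ R : Type*} [Fintype ι] [Fintype κ] [CommRing R]

theorem IsSymm.dotProduct_mulVec_comm {H : Matrix ι ι R} (hH : H.IsSymm) (v w : ι → R) :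
    v ⬝ᵥ H *ᵥ w = w ⬝ᵥ H *ᵥ v := by
  rw [← dotProduct_transpose_mulVec, hH.eq]

theorem transpose_mulVec_dotProduct_eq_zero {B : Matrix κ ι R} {v : ι → R} (hv : B *ᵥ v = 0)
    (y : κ → R) : Bᵀ *ᵥ y ⬝ᵥ v = 0 := by
  rw [dotProduct_comm, dotProduct_transpose_mulVec, hv, dotProduct_zero]

theorem dotProduct_add_smul_one_mulVec [DecidableEq ι] (H : Matrix ι ι R) (c : R) (v : ι → R) :
    v ⬝ᵥ (H + c • 1) *ᵥ v = v ⬝ᵥ H *ᵥ v + c * (v ⬝ᵥ v) := by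
  rw [add_mulVec, smul_mulVec, one_mulVec, dotProduct_add, dotProduct_smul, smul_eq_mul]

end Matrix

open Matrix

variable {ι κ : Type*} [Fintype ι] [Fintype κ]

noncomputable def quadModel (g : ι → ℝ) (H : Matrix ι ι ℝ) (d : ι → ℝ) : ℝ :=
  g ⬝ᵥ d + (1 / 2) * (d ⬝ᵥ H *ᵥ d)

theorem quadModel_sub_quadModel {H : Matrix ι ι ℝ} (hH : H.IsSymm) (g d d₀ : ι → ℝ) :
    quadModel g H d - quadModel g H d₀
      = (g + H *ᵥ d₀) ⬝ᵥ (d - d₀) + (1 / 2) * ((d - d₀) ⬝ᵥ H *ᵥ (d - d₀)) := by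
  simp only [quadModel, mulVec_sub, dotProduct_sub, add_dotProduct, sub_dotProduct,
    dotProduct_comm (H *ᵥ d₀), hH.dotProduct_mulVec_comm d₀ d]
  ring

theorem quadModel_add_le_of_kkt [DecidableEq ι] {H : Matrix ι ι ℝ} (hH : H.IsSymm)
    {B : Matrix κ ι ℝ} {g dstar d : ι → ℝ} {y : κ → ℝ} {lam : ℝ}
    (hkkt : (H + lam • 1) *ᵥ dstar - Bᵀ *ᵥ y = -g)
    (hpsd : ∀ e, B *ᵥ e = 0 → 0 ≤ e ⬝ᵥ (H + lam • 1) *ᵥ e) (hd : B *ᵥ d = B *ᵥ dstar) :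
    quadModel g H dstar + lam / 2 * (dstar ⬝ᵥ dstar)
      ≤ quadModel g H d + lam / 2 * (d ⬝ᵥ d) := by
  have he : B *ᵥ (d - dstar) = 0 := by rw [mulVec_sub, hd, sub_self]
  have hgrad : g + H *ᵥ dstar = Bᵀ *ᵥ y - lam • dstar := by
    rw [← neg_neg g, ← hkkt, add_mulVec, smul_mulVec, one_mulVec]; abel
  have hexpand := quadModel_sub_quadModel hH g d dstar
  rw [hgrad, sub_dotProduct, transpose_mulVec_dotProduct_eq_zero he] at hexpand
  have hM := hpsd _ he
  rw [dotProduct_add_smul_one_mulVec] at hM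
  simp only [smul_dotProduct, dotProduct_sub, sub_dotProduct, smul_eq_mul,
    dotProduct_comm d dstar] at hexpand hM
  linarith

theorem stmt_11_general {n m : ℕ} (H : Matrix (Fin n) (Fin n) ℝ) (hH : H.IsSymm)
    (B : Matrix (Fin m) (Fin n) ℝ) (g : Fin n → ℝ) (β : ℝ)
    (dstar : Fin n → ℝ) (y : Fin m → ℝ) (lam : ℝ) (hlam : 0 ≤ lam)
    (hfeas1 : B.mulVec dstar = 0)
    (hkkt : (H + lam • (1 : Matrix (Fin n) (Fin n) ℝ)).mulVec dstar - Bᵀ.mulVec y = -g)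
    (hcomp : lam * (β - Real.sqrt (∑ i, (dstar i) ^ 2)) = 0)
    (hpsd : ∀ d : Fin n → ℝ, B.mulVec d = 0 →
      0 ≤ d ⬝ᵥ (H + lam • (1 : Matrix (Fin n) (Fin n) ℝ)).mulVec d) :
    g ⬝ᵥ dstar + (1 / 2) * (dstar ⬝ᵥ H.mulVec dstar)
        ≤ -(1 / 2) * lam * (∑ i, (dstar i) ^ 2) ∧
    ∀ d : Fin n → ℝ, B.mulVec d = 0 → Real.sqrt (∑ i, (d i) ^ 2) ≤ β →
      g ⬝ᵥ dstar + (1 / 2) * (dstar ⬝ᵥ H.mulVec dstar)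
        ≤ g ⬝ᵥ d + (1 / 2) * (d ⬝ᵥ H.mulVec d) := by
  have hsum : ∀ v : Fin n → ℝ, ∑ i, v i ^ 2 = v ⬝ᵥ v := fun v => by simp only [dotProduct, sq]
  have hlagr : ∀ d, B *ᵥ d = 0 → quadModel g H dstar + lam / 2 * (dstar ⬝ᵥ dstar)
      ≤ quadModel g H d + lam / 2 * (d ⬝ᵥ d) :=
    fun d hd => quadModel_add_le_of_kkt hH hkkt hpsd (hd.trans hfeas1.symm)
  have hactive : lam * (dstar ⬝ᵥ dstar) = lam * β ^ 2 := by
    rcases mul_eq_zero.mp hcomp with h | h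
    · simp [h]
    · rw [← hsum, ← Real.sq_sqrt (Finset.sum_nonneg fun i _ => sq_nonneg (dstar i))]
      congr 2; linarith
  rw [hsum]
  refine ⟨?_, fun d hd hdβ => ?_⟩
  · have h0 := hlagr 0 (mulVec_zero B)
    simp only [quadModel, dotProduct_zero, mulVec_zero] at h0
    linarith
  · have hfeas : lam * (d ⬝ᵥ d) ≤ lam * β ^ 2 := by
      rw [← hsum]; exact mul_le_mul_of_nonneg_left (Real.sqrt_le_iff.mp hdβ).2 hlam
    have hopt := hlagr d hd
    unfold quadModel at hopt; linarith

theorem stmt_11 {n m : ℕ} (H : Matrix (Fin n) (Fin n) ℝ) (hH : H.IsSymm)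
    (B : Matrix (Fin m) (Fin n) ℝ) (g : Fin n → ℝ) (β : ℝ) (hβ : 0 < β)
    (dstar : Fin n → ℝ) (y : Fin m → ℝ) (lam : ℝ) (hlam : 0 ≤ lam)
    (hfeas1 : B.mulVec dstar = 0) (hfeas2 : Real.sqrt (∑ i, (dstar i) ^ 2) ≤ β)
    (hkkt : (H + lam • (1 : Matrix (Fin n) (Fin n) ℝ)).mulVec dstar - Bᵀ.mulVec y = -g)
    (hcomp : lam * (β - Real.sqrt (∑ i, (dstar i) ^ 2)) = 0)
    (hpsd : ∀ d : Fin n → ℝ, B.mulVec d = 0 →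
      0 ≤ d ⬝ᵥ (H + lam • (1 : Matrix (Fin n) (Fin n) ℝ)).mulVec d) :
    g ⬝ᵥ dstar + (1 / 2) * (dstar ⬝ᵥ H.mulVec dstar)
        ≤ -(1 / 2) * lam * (∑ i, (dstar i) ^ 2) ∧
    ∀ d : Fin n → ℝ, B.mulVec d = 0 → Real.sqrt (∑ i, (d i) ^ 2) ≤ β →
      g ⬝ᵥ dstar + (1 / 2) * (dstar ⬝ᵥ H.mulVec dstar)
        ≤ g ⬝ᵥ d + (1 / 2) * (d ⬝ᵥ H.mulVec d) :=
  stmt_11_general H hH B g β dstar y lam hlam hfeas1 hkkt hcomp hpsd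
end
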